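/- arXiv:0705.1079 — 2 statements merged into one kernel-verified Lean document; each statement's English description precedes it below -/
import Mathlib

section
/- Let (X, m) be a measure space such that the Hilbert space L²(X, m; ℂ) is separable, and let Y be a topological space equipped with its Borel σ-algebra and a finite measure m′. Let J : C_b(Y; ℂ) → L²(Y, m′) denote the canonical (bounded linear) map from the bounded continuous functions into L². If K : L²(X, m) → C_b(Y; ℂ) is a bounded linear operator, then the composition J ∘ K : L²(X, m) → L²(Y, m′) is a Hilbert–Schmidt operator and its Hilbert–Schmidt norm is at most ‖K‖ · (m′(Y))^{1/2}; equivalently, for every orthonormal (Hilbert) basis (φ_i)_{i∈ι} of L²(X, m) one has ∑_{i∈ι} ‖J(K φ_i)‖²_{L²(Y,m′)} ≤ ‖K‖² · m′(Y). -/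
/-!
For each `y`, the functional `φ ↦ (K φ) y` has norm at most `‖K‖`, so by Riesz representation and
Bessel's inequality `∑ᵢ |(K φᵢ) y|² ≤ ‖K‖²` pointwise in `y`. Integrating this bound against the
finite measure `m'` gives `∑ᵢ ‖K φᵢ‖²_{L²} ≤ ‖K‖² m'(Y)`.
-/

open MeasureTheory BoundedContinuousFunction

section Bessel

variable {𝕜 E ι : Type*} [RCLike 𝕜] [NormedAddCommGroup E] [InnerProductSpace 𝕜 E]
  [CompleteSpace E] {v : ι → E}

theorem Orthonormal.sum_norm_sq_apply_le (hv : Orthonormal 𝕜 v) (ℓ : E →L[𝕜] 𝕜)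
    (s : Finset ι) : ∑ i ∈ s, ‖ℓ (v i)‖ ^ 2 ≤ ‖ℓ‖ ^ 2 := by
  set k := (InnerProductSpace.toDual 𝕜 E).symm ℓ
  calc ∑ i ∈ s, ‖ℓ (v i)‖ ^ 2 = ∑ i ∈ s, ‖inner 𝕜 (v i) k‖ ^ 2 := by
        refine Finset.sum_congr rfl fun i _ => ?_
        rw [← inner_conj_symm, RCLike.norm_conj, InnerProductSpace.toDual_symm_apply]
    _ ≤ ‖k‖ ^ 2 := hv.sum_inner_products_le k
    _ = ‖ℓ‖ ^ 2 := by rw [LinearIsometryEquiv.norm_map]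

theorem Orthonormal.sum_norm_sq_eval_le {Y : Type*} [TopologicalSpace Y] (hv : Orthonormal 𝕜 v)
    (K : E →L[𝕜] (Y →ᵇ 𝕜)) (s : Finset ι) (y : Y) :
    ∑ i ∈ s, ‖K (v i) y‖ ^ 2 ≤ ‖K‖ ^ 2 :=
  calc ∑ i ∈ s, ‖K (v i) y‖ ^ 2 = ∑ i ∈ s, ‖(evalCLM 𝕜 y ∘L K) (v i)‖ ^ 2 := rfl
    _ ≤ ‖evalCLM 𝕜 y ∘L K‖ ^ 2 := hv.sum_norm_sq_apply_le _ s
    _ ≤ ‖K‖ ^ 2 := by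
      gcongr
      exact ContinuousLinearMap.opNorm_le_bound _ (norm_nonneg K) fun x =>
        ((K x).norm_coe_le_norm y).trans (K.le_opNorm x)

end Bessel

namespace BoundedContinuousFunction

variable {α 𝕜 ι : Type*} [TopologicalSpace α] [MeasurableSpace α] [BorelSpace α] [RCLike 𝕜]
  (μ : Measure α) [IsFiniteMeasure μ]

theorem norm_toLp_two_sq (f : α →ᵇ 𝕜) : ‖toLp 2 μ 𝕜 f‖ ^ 2 = ∫ x, ‖f x‖ ^ 2 ∂μ := by
  rw [← inner_self_eq_norm_sq (𝕜 := 𝕜), inner_toLp]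
  simp_rw [mul_comm (f _), RCLike.conj_mul, ← RCLike.ofReal_pow]
  rw [integral_ofReal, RCLike.ofReal_re]

theorem sum_norm_toLp_two_sq_le {f : ι → α →ᵇ 𝕜} {C : ℝ} (s : Finset ι)
    (hf : ∀ x, ∑ i ∈ s, ‖f i x‖ ^ 2 ≤ C) :
    ∑ i ∈ s, ‖toLp 2 μ 𝕜 (f i)‖ ^ 2 ≤ C * μ.real Set.univ := by
  have hint : ∀ i, Integrable (fun x => ‖f i x‖ ^ 2) μ := fun i =>
    ((f i).memLp_top.mono_exponent (p := (2 : ℕ)) le_top).integrable_norm_pow'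
  calc ∑ i ∈ s, ‖toLp 2 μ 𝕜 (f i)‖ ^ 2 = ∑ i ∈ s, ∫ x, ‖f i x‖ ^ 2 ∂μ := by
        simp only [norm_toLp_two_sq]
    _ = ∫ x, ∑ i ∈ s, ‖f i x‖ ^ 2 ∂μ := (integral_finsetSum s fun i _ => hint i).symm
    _ ≤ ∫ _, C ∂μ := integral_mono (integrable_finsetSum s fun i _ => hint i)
        (integrable_const C) hf
    _ = C * μ.real Set.univ := by rw [integral_const, smul_eq_mul, mul_comm]

theorem summable_norm_toLp_two_sq_and_tsum_le {f : ι → α →ᵇ 𝕜} {C : ℝ}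
    (hf : ∀ (s : Finset ι) x, ∑ i ∈ s, ‖f i x‖ ^ 2 ≤ C) :
    Summable (fun i => ‖toLp 2 μ 𝕜 (f i)‖ ^ 2) ∧
      ∑' i, ‖toLp 2 μ 𝕜 (f i)‖ ^ 2 ≤ C * μ.real Set.univ := by
  have hs := fun s => sum_norm_toLp_two_sq_le μ s (hf s)
  have hsum := summable_of_sum_le (fun i => by positivity) hs
  exact ⟨hsum, hsum.tsum_le_of_sum_le hs⟩

end BoundedContinuousFunction

theorem hilbert_schmidt_of_bounded_into_Cb_general
    {X : Type*} [MeasurableSpace X] (m : Measure X)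
    {Y : Type*} [TopologicalSpace Y] [MeasurableSpace Y] [BorelSpace Y]
    (m' : Measure Y) [IsFiniteMeasure m']
    (K : Lp ℂ 2 m →L[ℂ] (Y →ᵇ ℂ))
    {ι : Type*} (b : HilbertBasis ι ℂ (Lp ℂ 2 m)) :
    Summable (fun i : ι =>
      ‖BoundedContinuousFunction.toLp (E := ℂ) 2 m' ℂ (K (b i))‖ ^ 2) ∧
    ∑' i : ι, ‖BoundedContinuousFunction.toLp (E := ℂ) 2 m' ℂ (K (b i))‖ ^ 2 ≤
      ‖K‖ ^ 2 * (m' Set.univ).toReal :=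
  summable_norm_toLp_two_sq_and_tsum_le m' fun s y => b.orthonormal.sum_norm_sq_eval_le K s y

/-- **Hilbert–Schmidt bound for operators into bounded continuous functions.**
If `L²(X,m;ℂ)` is separable, `m'` is a finite Borel measure on a topological space `Y`,
`J : C_b(Y;ℂ) → L²(Y,m')` is the canonical bounded inclusion and `K : L²(X,m) → C_b(Y;ℂ)`
is a bounded linear operator, then `J ∘ K` is Hilbert–Schmidt with
`‖J ∘ K‖_{HS}² ≤ ‖K‖² · m'(Y)`: for every Hilbert basis `(φ_i)` of `L²(X,m)`,
the family `‖J(K φ_i)‖²` is summable with sum at most `‖K‖² · m'(Y)`. -/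
theorem hilbert_schmidt_of_bounded_into_Cb
    {X : Type*} [MeasurableSpace X] (m : Measure X)
    [TopologicalSpace.SeparableSpace (Lp ℂ 2 m)]
    {Y : Type*} [TopologicalSpace Y] [MeasurableSpace Y] [BorelSpace Y]
    (m' : Measure Y) [IsFiniteMeasure m']
    (K : Lp ℂ 2 m →L[ℂ] (Y →ᵇ ℂ))
    {ι : Type*} (b : HilbertBasis ι ℂ (Lp ℂ 2 m)) :
    Summable (fun i : ι =>
      ‖BoundedContinuousFunction.toLp (E := ℂ) 2 m' ℂ (K (b i))‖ ^ 2) ∧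
    ∑' i : ι, ‖BoundedContinuousFunction.toLp (E := ℂ) 2 m' ℂ (K (b i))‖ ^ 2 ≤
      ‖K‖ ^ 2 * (m' Set.univ).toReal :=
  hilbert_schmidt_of_bounded_into_Cb_general m m' K b
end

section
/- Let X be a nonempty, connected, locally compact Hausdorff topological space, and let Γ be a group acting on X by homeomorphisms (a continuous action). Assume the action is properly discontinuous, i.e., for all compact subsets K, L ⊆ X the set {γ ∈ Γ : (γ • K) ∩ L ≠ ∅} is finite, and cocompact, i.e., there exists a compact K ⊆ X with ⋃_{γ∈Γ} γ • K = X. Then Γ is a finitely generated group. -/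
open Pointwise

/-- **Finite generation from a cocompact properly discontinuous action.**
If a group `Γ` acts by homeomorphisms on a nonempty, connected, locally compact Hausdorff
space `X`, the action is properly discontinuous and cocompact, then `Γ` is finitely
generated. -/
theorem group_fg_of_properlyDiscontinuous_cocompact
    {X : Type*} [TopologicalSpace X] [Nonempty X] [ConnectedSpace X]
    [LocallyCompactSpace X] [T2Space X]
    {Γ : Type*} [Group Γ] [MulAction Γ X]
    (hcont : ∀ γ : Γ, Continuous fun x : X => γ • x)
    (hpd : ∀ K L : Set X, IsCompact K → IsCompact L →
      {γ : Γ | (γ • K) ∩ L ≠ ∅}.Finite)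
    (hcc : ∃ K : Set X, IsCompact K ∧ ⋃ γ : Γ, γ • K = Set.univ) :
    Group.FG Γ := by
  obtain ⟨K, hKc, hKcov⟩ := hcc
  -- K is nonempty since X is nonempty
  have hKne : K.Nonempty := by
    rcases Set.eq_empty_or_nonempty K with h | h
    · exfalso
      have : (Set.univ : Set X) = ∅ := by
        rw [← hKcov]
        simp [h]
      exact (Set.univ_nonempty : (Set.univ : Set X).Nonempty).ne_empty this
    · exact h
  -- fatten K to a compact set K' with K ⊆ interior K'
  obtain ⟨K', hK'c, hKK'⟩ := exists_compact_superset hKc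
  set U : Set X := interior K' with hU
  have hUopen : IsOpen U := isOpen_interior
  have hUK' : U ⊆ K' := interior_subset
  -- the finite generating set
  set S : Set Γ := {γ : Γ | (γ • K') ∩ K' ≠ ∅} with hSdef
  have hSfin : S.Finite := hpd K' K' hK'c hK'c
  set H : Subgroup Γ := Subgroup.closure S with hH
  have hSH : S ⊆ (H : Set Γ) := Subgroup.subset_closure
  -- translates of U are open
  have hsmul_open : ∀ γ : Γ, IsOpen (γ • U) := by
    intro γ
    have : γ • U = (fun x : X => γ⁻¹ • x) ⁻¹' U := by
      ext x
      simp [Set.mem_smul_set, Set.mem_preimage]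
      constructor
      · rintro ⟨y, hy, rfl⟩; simpa using hy
      · intro h; exact ⟨γ⁻¹ • x, h, by simp⟩
    rw [this]
    exact hUopen.preimage (hcont γ⁻¹)
  -- the two open sets
  set A : Set X := ⋃ γ ∈ (H : Set Γ), γ • U with hA
  set B : Set X := ⋃ γ ∈ ((H : Set Γ))ᶜ, γ • U with hB
  have hAopen : IsOpen A := isOpen_biUnion fun γ _ => hsmul_open γ
  have hBopen : IsOpen B := isOpen_biUnion fun γ _ => hsmul_open γ
  -- A ∪ B = univ
  have hcover : A ∪ B = Set.univ := by
    apply Set.eq_univ_of_univ_subset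
    rw [← hKcov]
    intro x hx
    obtain ⟨s, ⟨γ, rfl⟩, hxs⟩ := hx
    by_cases hγ : γ ∈ H
    · left
      exact Set.mem_biUnion hγ (Set.smul_set_mono hKK' hxs)
    · right
      exact Set.mem_biUnion hγ (Set.smul_set_mono hKK' hxs)
  -- A and B are disjoint
  have hdisj : A ∩ B = ∅ := by
    by_contra h
    obtain ⟨x, hxA, hxB⟩ := Set.nonempty_iff_ne_empty.mpr h
    obtain ⟨s, ⟨γ₁, rfl⟩, hs⟩ := hxA
    obtain ⟨_, ⟨hγ₁, rfl⟩, ⟨u₁, hu₁, rfl⟩⟩ := hs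
    obtain ⟨s, ⟨γ₂, rfl⟩, hs⟩ := hxB
    obtain ⟨_, ⟨hγ₂, rfl⟩, ⟨u₂, hu₂, heq⟩⟩ := hs
    have hmem : γ₂⁻¹ * γ₁ ∈ S := by
      rw [hSdef]
      apply Set.nonempty_iff_ne_empty.mp
      refine ⟨(γ₂⁻¹ * γ₁) • u₁, ⟨u₁, hUK' hu₁, rfl⟩, ?_⟩
      have heq' : γ₂ • u₂ = γ₁ • u₁ := heq
      have : (γ₂⁻¹ * γ₁) • u₁ = u₂ := by
        rw [mul_smul, ← heq', inv_smul_smul]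
      rw [this]
      exact hUK' hu₂
    exact hγ₂ (by
      have : γ₂ = γ₁ * (γ₂⁻¹ * γ₁)⁻¹ := by group
      rw [this]
      exact H.mul_mem hγ₁ (H.inv_mem (hSH hmem)))
  -- A is nonempty
  obtain ⟨x₀, hx₀⟩ := hKne
  have hx₀U : x₀ ∈ U := hKK' hx₀
  have hAne : A.Nonempty :=
    ⟨x₀, Set.mem_biUnion H.one_mem ⟨x₀, hx₀U, one_smul _ _⟩⟩
  -- A is clopen, hence A = univ
  have hAcompl : Aᶜ = B := by
    apply Set.Subset.antisymm
    · intro x hx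
      have : x ∈ A ∪ B := hcover ▸ Set.mem_univ x
      rcases this with h | h
      · exact absurd h hx
      · exact h
    · intro x hx hxA
      exact Set.eq_empty_iff_forall_notMem.mp hdisj x ⟨hxA, hx⟩
  have hAclosed : IsClosed A := by
    rw [← isOpen_compl_iff, hAcompl]
    exact hBopen
  have hAuniv : A = Set.univ :=
    (IsClopen.eq_univ ⟨hAclosed, hAopen⟩ hAne)
  -- every γ is in H
  have hHtop : H = ⊤ := by
    rw [eq_top_iff]
    intro γ _
    have : γ • x₀ ∈ A := hAuniv ▸ Set.mem_univ _
    obtain ⟨_, ⟨h, rfl⟩, hmem⟩ := this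
    obtain ⟨_, ⟨hh, rfl⟩, ⟨u, hu, heq⟩⟩ := hmem
    have hmemS : h⁻¹ * γ ∈ S := by
      rw [hSdef]
      apply Set.nonempty_iff_ne_empty.mp
      refine ⟨(h⁻¹ * γ) • x₀, ⟨x₀, hUK' hx₀U, rfl⟩, ?_⟩
      have : (h⁻¹ * γ) • x₀ = u := by
        rw [mul_smul, ← heq, inv_smul_smul]
      rw [this]
      exact hUK' hu
    have : γ = h * (h⁻¹ * γ) := by group
    rw [this]
    exact H.mul_mem hh (hSH hmemS)
  exact Group.fg_iff.mpr ⟨S, by rw [← hH, hHtop], hSfin⟩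
end
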